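/- For every nonnegative integer n and x ∈ (0,1), the identity Fₙ(x) = (1-x)^{n/2} Pₙ((2-x)/(2√(1-x))) holds, where Fₙ(x) = ₂F₁(-n, 1/2; 1; x) and Pₙ is the n-th Legendre polynomial. -/

import Mathlib

open scoped Nat

/-- Pochhammer symbol `(a)_j` for real `a`. -/
noncomputable def poch (a : ℝ) (j : ℕ) : ℝ := (ascPochhammer ℝ j).eval a

/-- The terminating hypergeometric polynomial `Fₙ(x) = ₂F₁(-n, 1/2; 1; x)`. -/
noncomputable def F (n : ℕ) (x : ℝ) : ℝ :=
  ∑ j ∈ Finset.range (n + 1),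
    poch (-(n : ℝ)) j * poch (1/2) j / ((j ! : ℝ) ^ 2) * x ^ j

/-- The `n`-th Legendre polynomial via the Rodrigues formula. -/
noncomputable def legendreP (n : ℕ) (y : ℝ) : ℝ :=
  (1 / (2 ^ n * (n ! : ℝ))) * iteratedDeriv n (fun t : ℝ => (t ^ 2 - 1) ^ n) y

open Polynomial Finset

/-!
With `s = √(1 - x)`, `u = (1 + s) / 2` and `v = (1 - s) / 2` we have `u + v = 1`,
`uv = x / 4`, and the Legendre argument `y` satisfies `s (y + 1) / 2 = u²`, `s (y - 1) / 2 = v²`.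
Expanding `Fₙ(x) = ∑ C(n,k) C(2k,k) (-x/4)ᵏ` and
`Pₙ(y) = ∑ C(n,k)² ((y-1)/2)ᵏ ((y+1)/2)ⁿ⁻ᵏ` reduces the claim to the identity
`∑ C(n,k) C(2k,k) ((u+v)²)ⁿ⁻ᵏ (-uv)ᵏ = ∑ C(n,k)² u²⁽ⁿ⁻ᵏ⁾ v²ᵏ`: both sides are the coefficient
of `Xⁿ` in `((X - uv)² + (u+v)² X)ⁿ = ((X + u²)(X + v²))ⁿ`.
-/

lemma poch_neg_natCast (n j : ℕ) : poch (-(n : ℝ)) j = (-1) ^ j * n.descFactorial j := by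
  rw [poch, ascPochhammer_eval_neg_eq_descPochhammer, descPochhammer_eval_eq_descFactorial]

lemma poch_half_mul_four_pow (j : ℕ) : poch (1 / 2) j * 4 ^ j = j.centralBinom * j ! := by
  induction j with
  | zero => simp [poch]
  | succ j ih =>
    have h' : ((j + 1 : ℕ) : ℝ) * (j + 1).centralBinom = 2 * (2 * j + 1) * j.centralBinom := by
      exact_mod_cast Nat.succ_mul_centralBinom_succ j
    rw [poch, ascPochhammer_succ_eval, ← poch, pow_succ, Nat.factorial_succ]
    push_cast at h' ⊢
    linear_combination (2 * (j : ℝ) + 1) * 2 * ih - (j ! : ℝ) * h'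

lemma F_eq_sum_choose_mul_centralBinom (n : ℕ) (x : ℝ) :
    F n x = ∑ k ∈ range (n + 1), (n.choose k * k.centralBinom : ℝ) * (-(x / 4)) ^ k := by
  refine sum_congr rfl fun k _ => ?_
  have hfac : (n.descFactorial k : ℝ) = k ! * n.choose k := by
    exact_mod_cast Nat.descFactorial_eq_factorial_mul_choose n k
  have hhalf : poch (1 / 2) k = k.centralBinom * k ! / 4 ^ k := by
    rw [← poch_half_mul_four_pow, mul_div_cancel_right₀ _ (by positivity)]
  rw [poch_neg_natCast, hfac, hhalf, neg_pow (x / 4), div_pow]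
  field_simp

lemma iteratedDeriv_add_const_pow {𝕜 : Type*} [NontriviallyNormedField 𝕜] (c y : 𝕜)
    (m k : ℕ) :
    iteratedDeriv k (fun t => (t + c) ^ m) y = m.descFactorial k * (y + c) ^ (m - k) := by
  rw [iteratedDeriv_comp_add_const k (· ^ m) c]
  exact iteratedDeriv_pow m k

lemma legendreP_eq_sum (n : ℕ) (y : ℝ) :
    legendreP n y = ∑ k ∈ range (n + 1),
      (n.choose k : ℝ) ^ 2 * ((y - 1) / 2) ^ k * ((y + 1) / 2) ^ (n - k) := by
  have hsplit : (fun t : ℝ => (t ^ 2 - 1) ^ n) = fun t => (t + 1) ^ n * (t + -1) ^ n := by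
    funext t; rw [← mul_pow]; ring
  rw [legendreP, hsplit, iteratedDeriv_fun_mul (by fun_prop) (by fun_prop), mul_sum]
  refine sum_congr rfl fun k hk => ?_
  have hkn : k ≤ n := Nat.lt_succ_iff.mp (mem_range.mp hk)
  have hfac : (n.descFactorial k * n.descFactorial (n - k) : ℝ) = n ! * n.choose k := by
    rw [Nat.descFactorial_eq_factorial_mul_choose n (n - k), Nat.choose_symm hkn,
      ← Nat.factorial_mul_descFactorial hkn]
    push_cast
    ring
  have htwo : (2 : ℝ) ^ n = 2 ^ k * 2 ^ (n - k) := by rw [← pow_add, Nat.add_sub_cancel' hkn]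
  rw [iteratedDeriv_add_const_pow, iteratedDeriv_add_const_pow, Nat.sub_sub_self hkn, htwo,
    div_pow, div_pow, ← sub_eq_add_neg]
  field_simp
  linear_combination (n.choose k : ℝ) * (y + 1) ^ (n - k) * (y - 1) ^ k * hfac

section CommRing

variable {R : Type*} [CommRing R]

lemma coeff_X_add_C_pow_mul_X_add_C_pow (a b : R) (n : ℕ) :
    ((X + C a) ^ n * (X + C b) ^ n).coeff n =
      ∑ k ∈ range (n + 1), (n.choose k : R) ^ 2 * a ^ (n - k) * b ^ k := by
  rw [coeff_mul, Nat.sum_antidiagonal_eq_sum_range_succ_mk]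
  refine sum_congr rfl fun k hk => ?_
  have hkn : k ≤ n := Nat.lt_succ_iff.mp (mem_range.mp hk)
  rw [coeff_X_add_C_pow, coeff_X_add_C_pow, Nat.sub_sub_self hkn, Nat.choose_symm hkn]
  ring

lemma coeff_sq_add_C_mul_X_pow (c d : R) (n : ℕ) :
    (((X + C c) ^ 2 + C d * X) ^ n).coeff n =
      ∑ k ∈ range (n + 1), (n.choose k * k.centralBinom : R) * d ^ (n - k) * c ^ k := by
  rw [add_pow, finsetSum_coeff]
  refine sum_congr rfl fun k hk => ?_
  have hkn : k ≤ n := Nat.lt_succ_iff.mp (mem_range.mp hk)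
  have hterm : ((X + C c) ^ 2) ^ k * (C d * X) ^ (n - k) * (n.choose k : R[X]) =
      C (n.choose k * d ^ (n - k)) * (X ^ (n - k) * (X + C c) ^ (2 * k)) := by
    rw [← pow_mul]
    simp only [map_mul, map_pow, map_natCast]
    ring
  rw [hterm, coeff_C_mul, coeff_X_pow_mul', if_pos (Nat.sub_le n k), Nat.sub_sub_self hkn,
    coeff_X_add_C_pow, two_mul, Nat.add_sub_cancel, ← two_mul,
    ← Nat.centralBinom_eq_two_mul_choose]
  ring

theorem sum_choose_mul_centralBinom_eq_sum_choose_sq (u v : R) (n : ℕ) :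
    ∑ k ∈ range (n + 1),
        (n.choose k * k.centralBinom : R) * ((u + v) ^ 2) ^ (n - k) * (-(u * v)) ^ k =
      ∑ k ∈ range (n + 1), (n.choose k : R) ^ 2 * (u ^ 2) ^ (n - k) * (v ^ 2) ^ k := by
  have hfactor : (X + C (-(u * v))) ^ 2 + C ((u + v) ^ 2) * X =
      (X + C (u ^ 2)) * (X + C (v ^ 2)) := by
    simp only [map_neg, map_mul, map_add, map_pow]
    ring
  rw [← coeff_sq_add_C_mul_X_pow, hfactor, mul_pow, coeff_X_add_C_pow_mul_X_add_C_pow]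

end CommRing

theorem F_eq_legendre (n : ℕ) (x : ℝ) (hx : x ∈ Set.Ioo (0:ℝ) 1) :
    F n x = Real.sqrt (1 - x) ^ n *
      legendreP n ((2 - x) / (2 * Real.sqrt (1 - x))) := by
  set s := Real.sqrt (1 - x)
  set y := (2 - x) / (2 * s) with hy
  have hs : 0 < s := Real.sqrt_pos.mpr (by linarith [hx.2])
  have hss : s ^ 2 = 1 - x := Real.sq_sqrt (by linarith [hx.2])
  set u := (1 + s) / 2
  set v := (1 - s) / 2
  have hsum : u + v = 1 := by ring
  have hprod : u * v = x / 4 := by linear_combination -hss / 4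
  have hu : u ^ 2 = s * ((y + 1) / 2) := by rw [hy]; field_simp; linear_combination hss
  have hv : v ^ 2 = s * ((y - 1) / 2) := by rw [hy]; field_simp; linear_combination hss
  calc F n x
      = ∑ k ∈ range (n + 1),
          (n.choose k * k.centralBinom : ℝ) * ((u + v) ^ 2) ^ (n - k) * (-(u * v)) ^ k := by
        simp only [F_eq_sum_choose_mul_centralBinom, hsum, hprod, one_pow, mul_one]
    _ = ∑ k ∈ range (n + 1), (n.choose k : ℝ) ^ 2 * (u ^ 2) ^ (n - k) * (v ^ 2) ^ k :=
        sum_choose_mul_centralBinom_eq_sum_choose_sq u v n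
    _ = s ^ n * legendreP n y := by
        rw [legendreP_eq_sum, mul_sum]
        refine sum_congr rfl fun k hk => ?_
        have hkn : k ≤ n := Nat.lt_succ_iff.mp (mem_range.mp hk)
        have hsn : s ^ n = s ^ k * s ^ (n - k) := by
          rw [← pow_add, Nat.add_sub_cancel' hkn]
        rw [hu, hv, mul_pow, mul_pow, hsn]
        ring
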